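/- arXiv:1706.07707 — 2 statements merged into one kernel-verified Lean document; each statement's English description precedes it below -/
import Mathlib

section
/- For every k ≥ 0, the aggregate perturbation of D-DPS satisfies the recursive bound g_k ≤ n B α_k + 2 n ε Γ Σ_{r=1}^{k−1} γ^{k−r} g_{r−1}, where sums over empty index ranges are zero and g_{−1} = 0. -/
/-!
Since `∑ⱼ aᵢⱼ xⱼᵏ` is a convex combination of points of `X`, it is fixed by the projection, and
nonexpansiveness of the projection gives `‖gᵢᵏ‖ ≤ αₖ B + 2 ε ‖yᵢᵏ‖`. Stacking `zᵏ = (xᵏ, yᵏ)`, the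
iteration reads `zᵏ⁺¹ = M zᵏ + (gᵏ, 0)` with `z⁰ = 0`, so `zᵏ = ∑_{r=1}^{k} Mᵏ⁻ʳ (gʳ⁻¹, 0)`. The
`y`-rows of the limit of `Mˢ` vanish, so the `y`-rows of `Mˢ` have absolute row sums at most
`Γ γˢ`; the term `r = k` drops out because `M⁰ = I` does not mix `x` into `y`. Summing the bound on
`‖yᵢᵏ‖` over the agents gives the recursion.
-/

open Finset Filter
open scoped RealInnerProductSpace

section NearestPoint

variable {F : Type*} [NormedAddCommGroup F]

structure IsNearestPointMap (K : Set F) (P : F → F) : Prop where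
  mem : ∀ v, P v ∈ K
  nearest : ∀ v, ∀ w ∈ K, ‖P v - v‖ ≤ ‖w - v‖

variable {K : Set F} {P : F → F}

namespace IsNearestPointMap

theorem apply_of_mem (hP : IsNearestPointMap K P) {w : F} (hw : w ∈ K) : P w = w := by
  have h := hP.nearest w w hw
  rw [sub_self, norm_zero] at h
  exact sub_eq_zero.mp (norm_le_zero_iff.mp h)

variable [InnerProductSpace ℝ F]

theorem inner_sub_le_zero (hP : IsNearestPointMap K P) (hK : Convex ℝ K) (v : F) {w : F}
    (hw : w ∈ K) : ⟪v - P v, w - P v⟫ ≤ 0 := by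
  refine (norm_eq_iInf_iff_real_inner_le_zero hK (hP.mem v)).mp ?_ w hw
  have : Nonempty K := ⟨⟨w, hw⟩⟩
  refine le_antisymm (le_ciInf fun w => ?_) (ciInf_le ⟨0, ?_⟩ (⟨P v, hP.mem v⟩ : K))
  · rw [norm_sub_rev v, norm_sub_rev v]
    exact hP.nearest v w w.2
  · rintro _ ⟨w, rfl⟩
    exact norm_nonneg _

theorem norm_sub_le_norm_sub (hP : IsNearestPointMap K P) (hK : Convex ℝ K) (u v : F) :
    ‖P u - P v‖ ≤ ‖u - v‖ := by
  have hu : 0 ≤ ⟪u - P u, P u - P v⟫ := by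
    have h := hP.inner_sub_le_zero hK u (hP.mem v)
    rw [← neg_sub (P u) (P v), inner_neg_right] at h
    linarith
  have hv : ⟪v - P v, P u - P v⟫ ≤ 0 := hP.inner_sub_le_zero hK v (hP.mem u)
  have key : ‖P u - P v‖ ^ 2 ≤ ‖u - v‖ * ‖P u - P v‖ := by
    calc ‖P u - P v‖ ^ 2 ≤ ⟪u - v, P u - P v⟫ := by
          rw [show u - v = (P u - P v) + (u - P u) - (v - P v) by abel, inner_sub_left,
            inner_add_left, real_inner_self_eq_norm_sq]
          linarith
      _ ≤ ‖u - v‖ * ‖P u - P v‖ := real_inner_le_norm _ _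
  nlinarith [norm_nonneg (P u - P v), norm_nonneg (u - v)]

theorem norm_map_add_sub_sub_le (hP : IsNearestPointMap K P) (hK : Convex ℝ K) {w : F}
    (hw : w ∈ K) (a b : F) : ‖P (w + a - b) - w - a‖ ≤ ‖b‖ + 2 * ‖a‖ := by
  calc ‖P (w + a - b) - w - a‖ = ‖(P (w + a - b) - P w) - a‖ := by rw [hP.apply_of_mem hw]
    _ ≤ ‖(w + a - b) - w‖ + ‖a‖ :=
        (norm_sub_le _ _).trans (add_le_add_left (hP.norm_sub_le_norm_sub hK _ _) _)
    _ ≤ ‖b‖ + 2 * ‖a‖ := by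
        rw [show w + a - b - w = a - b by abel]
        linarith [norm_sub_le a b]

end IsNearestPointMap

end NearestPoint
namespace Matrix

variable {l m n o R E : Type*} [Fintype n]

section Semiring

variable [Semiring R] [AddCommMonoid E] [Module R E]

def smulVec (M : Matrix m n R) (v : n → E) : m → E := fun i => ∑ j, M i j • v j

@[simp]
theorem smulVec_apply (M : Matrix m n R) (v : n → E) (i : m) :
    M.smulVec v i = ∑ j, M i j • v j := rfl

theorem one_smulVec [DecidableEq n] (v : n → E) : (1 : Matrix n n R).smulVec v = v := by
  ext i
  simp [one_apply, ite_smul]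

theorem mul_smulVec [Fintype m] (M : Matrix l m R) (N : Matrix m n R) (v : n → E) :
    (M * N).smulVec v = M.smulVec (N.smulVec v) := by
  ext i
  simp only [smulVec_apply, mul_apply, sum_smul, smul_sum, mul_smul]
  exact sum_comm

theorem smul_smulVec (c : R) (M : Matrix m n R) (v : n → E) :
    (c • M).smulVec v = c • M.smulVec v := by
  ext i
  simp [smul_sum, mul_smul]

theorem smulVec_sum {ι : Type*} (M : Matrix m n R) (s : Finset ι) (v : ι → n → E) :
    M.smulVec (∑ r ∈ s, v r) = ∑ r ∈ s, M.smulVec (v r) := by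
  ext i
  simp only [smulVec_apply, Finset.sum_apply, smul_sum]
  exact sum_comm

theorem fromBlocks_smulVec_sumElim [Fintype o] (A : Matrix l n R) (B : Matrix l o R)
    (C : Matrix m n R) (D : Matrix m o R) (u : n → E) (v : o → E) :
    (fromBlocks A B C D).smulVec (Sum.elim u v) =
      Sum.elim (A.smulVec u + B.smulVec v) (C.smulVec u + D.smulVec v) := by
  ext (i | i) <;> simp [Fintype.sum_sum_type]

theorem eq_sum_pow_smulVec_of_recurrence [DecidableEq n] {M : Matrix n n R} {Z G : ℕ → n → E}
    (hZ0 : Z 0 = 0) (hZ : ∀ k, Z (k + 1) = M.smulVec (Z k) + G k) (k : ℕ) :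
    Z k = ∑ r ∈ Icc 1 k, (M ^ (k - r)).smulVec (G (r - 1)) := by
  induction k with
  | zero => simp [hZ0]
  | succ k ih =>
    rw [hZ, ih, smulVec_sum, sum_Icc_succ_top (by omega), Nat.sub_self, pow_zero, one_smulVec,
      Nat.add_sub_cancel]
    congr 1
    refine sum_congr rfl fun r hr => ?_
    rw [← mul_smulVec, ← pow_succ', show k + 1 - r = k - r + 1 by grind]

end Semiring

theorem sub_smulVec [Ring R] [AddCommGroup E] [Module R E] (M N : Matrix m n R) (v : n → E) :
    (M - N).smulVec v = M.smulVec v - N.smulVec v := by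
  ext i
  simp [sub_smul]

section Real

variable [SeminormedAddCommGroup E] [NormedSpace ℝ E]

theorem norm_smulVec_apply_le (M : Matrix m n ℝ) (v : n → E) (i : m) :
    ‖M.smulVec v i‖ ≤ (∑ j, |M i j|) * ∑ j, ‖v j‖ := by
  rw [mul_sum]
  refine (norm_sum_le _ _).trans (sum_le_sum fun j _ => ?_)
  rw [norm_smul, Real.norm_eq_abs]
  exact mul_le_mul_of_nonneg_right
    (single_le_sum (fun j _ => abs_nonneg (M i j)) (mem_univ j)) (norm_nonneg _)

theorem norm_recurrence_apply_le [DecidableEq n] {M : Matrix n n ℝ} {Z G : ℕ → n → E}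
    (hZ0 : Z 0 = 0) (hZ : ∀ k, Z (k + 1) = M.smulVec (Z k) + G k) {i : n}
    (hGi : ∀ k, G k i = 0) {c : ℕ → ℝ} (hM : ∀ s, ∑ j, |(M ^ s) i j| ≤ c s) (k : ℕ) :
    ‖Z k i‖ ≤ ∑ r ∈ Icc 1 (k - 1), c (k - r) * ∑ j, ‖G (r - 1) j‖ := by
  rw [eq_sum_pow_smulVec_of_recurrence hZ0 hZ]
  cases k with
  | zero => simp
  | succ k =>
    rw [sum_Icc_succ_top (by omega), Nat.sub_self, pow_zero, one_smulVec, Nat.add_sub_cancel,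
      Pi.add_apply, hGi, add_zero, Finset.sum_apply]
    refine (norm_sum_le _ _).trans (sum_le_sum fun r _ => ?_)
    exact (norm_smulVec_apply_le _ _ _).trans
      (mul_le_mul_of_nonneg_right (hM _) (sum_nonneg fun j _ => norm_nonneg _))

end Real

end Matrix

theorem ddps_stack_succ {ι R E : Type*} [Fintype ι] [DecidableEq ι] [Ring R] [AddCommGroup E]
    [Module R E] {A Bh : Matrix ι ι R} {ε : R} {x y gv : ℕ → ι → E}
    (hgv : ∀ k i, gv k i = x (k + 1) i - ∑ j, A i j • x k j - ε • y k i)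
    (hyupd : ∀ k i, y (k + 1) i =
      x k i - ∑ j, A i j • x k j + (∑ j, Bh i j • y k j) - ε • y k i) (k : ℕ) :
    Sum.elim (x (k + 1)) (y (k + 1)) =
      (Matrix.fromBlocks A (ε • 1) (1 - A) (Bh - ε • 1)).smulVec (Sum.elim (x k) (y k)) +
        Sum.elim (gv k) 0 := by
  rw [Matrix.fromBlocks_smulVec_sumElim, Matrix.sub_smulVec, Matrix.sub_smulVec,
    Matrix.smul_smulVec, Matrix.one_smulVec, Matrix.one_smulVec]
  ext (i | i)
  · simp [hgv]
  · simp only [Sum.elim_inr, hyupd, Pi.add_apply, Pi.sub_apply, Matrix.smulVec_apply,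
      Pi.smul_apply, Pi.zero_apply, add_zero]
    abel

theorem ddps_aggregate_perturbation_bound_general
    {n p : ℕ}
    (f : Fin n → EuclideanSpace ℝ (Fin p) → ℝ)
    (B : ℝ)
    (hsubB : ∀ (i : Fin n) (u s : EuclideanSpace ℝ (Fin p)),
      (∀ v, f i u + ⟪s, v - u⟫ ≤ f i v) → ‖s‖ ≤ B)
    (X : Set (EuclideanSpace ℝ (Fin p)))
    (hXcv : Convex ℝ X)
    (hX0 : (0 : EuclideanSpace ℝ (Fin p)) ∈ X)
    (P : EuclideanSpace ℝ (Fin p) → EuclideanSpace ℝ (Fin p))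
    (hPmem : ∀ v, P v ∈ X)
    (hPproj : ∀ v w, w ∈ X → ‖P v - v‖ ≤ ‖w - v‖)
    (A Bh : Matrix (Fin n) (Fin n) ℝ)
    (hAnn : ∀ i j, 0 ≤ A i j) (hArow : ∀ i, ∑ j, A i j = 1)
    (ε : ℝ) (hε : 0 < ε)
    (α : ℕ → ℝ) (hαnn : ∀ k, 0 ≤ α k)
    (x y d : ℕ → Fin n → EuclideanSpace ℝ (Fin p))
    (hx0 : ∀ i, x 0 i = 0) (hy0 : ∀ i, y 0 i = 0)
    (hd : ∀ k i v, f i (x k i) + ⟪d k i, v - x k i⟫ ≤ f i v)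
    (hxupd : ∀ k i, x (k + 1) i = P (∑ j, A i j • x k j + ε • y k i - α k • d k i))
    (hyupd : ∀ k i, y (k + 1) i =
      x k i - ∑ j, A i j • x k j + (∑ j, Bh i j • y k j) - ε • y k i)
    (gv : ℕ → Fin n → EuclideanSpace ℝ (Fin p))
    (hgv : ∀ k i, gv k i = x (k + 1) i - ∑ j, A i j • x k j - ε • y k i)
    (g : ℕ → ℝ) (hg : ∀ k, g k = ∑ i, ‖gv k i‖)
    (Γ γ : ℝ)
    (hM : ∀ (k : ℕ) (i : Fin n ⊕ Fin n),
      ∑ j, |((Matrix.fromBlocks A (ε • (1 : Matrix (Fin n) (Fin n) ℝ))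
          ((1 : Matrix (Fin n) (Fin n) ℝ) - A) (Bh - ε • (1 : Matrix (Fin n) (Fin n) ℝ))) ^ k
        - Matrix.fromBlocks (Matrix.of fun _ _ => (n : ℝ)⁻¹)
            (Matrix.of fun _ _ => (n : ℝ)⁻¹) 0 0 :
          Matrix (Fin n ⊕ Fin n) (Fin n ⊕ Fin n) ℝ) i j| ≤ Γ * γ ^ k)
    :
    ∀ k : ℕ,
      g k ≤ n * B * α k +
        2 * n * ε * Γ * ∑ r ∈ Finset.Icc 1 (k - 1), γ ^ (k - r) * g (r - 1) := by
  have hP : IsNearestPointMap X P := ⟨hPmem, hPproj⟩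
  have hxX : ∀ k i, x k i ∈ X := by
    rintro (_ | k) i
    exacts [hx0 i ▸ hX0, hxupd k i ▸ hPmem _]
  have hper (k : ℕ) (i : Fin n) : ‖gv k i‖ ≤ B * α k + 2 * ε * ‖y k i‖ := by
    have hw := hXcv.sum_mem (fun j _ => hAnn i j) (hArow i) fun j _ => hxX k j
    have hdB : ‖d k i‖ ≤ B := hsubB i _ _ (hd k i)
    calc ‖gv k i‖ ≤ ‖α k • d k i‖ + 2 * ‖ε • y k i‖ := by
          rw [hgv, hxupd]; exact hP.norm_map_add_sub_sub_le hXcv hw _ _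
      _ ≤ B * α k + 2 * ε * ‖y k i‖ := by
          rw [norm_smul, norm_smul, Real.norm_of_nonneg (hαnn k), Real.norm_of_nonneg hε.le]
          nlinarith [hαnn k]
  have hy (k : ℕ) (i : Fin n) :
      ‖y k i‖ ≤ Γ * ∑ r ∈ Icc 1 (k - 1), γ ^ (k - r) * g (r - 1) := by
    -- the `y`-rows of the limit matrix vanish
    have hrow (s : ℕ) : ∑ j, |(Matrix.fromBlocks A (ε • 1) (1 - A) (Bh - ε • 1) ^ s)
        (Sum.inr i) j| ≤ Γ * γ ^ s := by
      simpa using hM s (Sum.inr i)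
    have := Matrix.norm_recurrence_apply_le (Z := fun k => Sum.elim (x k) (y k))
      (by ext (j | j) <;> simp [hx0, hy0]) (ddps_stack_succ hgv hyupd) (i := Sum.inr i)
      (fun _ => rfl) hrow k
    simpa [Fintype.sum_sum_type, ← hg, mul_sum, mul_assoc] using this
  intro k
  calc g k = ∑ i, ‖gv k i‖ := hg k
    _ ≤ ∑ _i : Fin n, (B * α k + 2 * ε * (Γ * ∑ r ∈ Icc 1 (k - 1), γ ^ (k - r) * g (r - 1))) :=
        sum_le_sum fun i _ => (hper k i).trans (by gcongr; exact hy k i)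
    _ = _ := by simp only [sum_const, card_univ, Fintype.card_fin, nsmul_eq_mul]; ring

theorem ddps_aggregate_perturbation_bound
    {n p : ℕ} (hn : 1 ≤ n) (hp : 1 ≤ p)
    (f : Fin n → EuclideanSpace ℝ (Fin p) → ℝ)
    (hconv : ∀ i, ConvexOn ℝ Set.univ (f i))
    (B : ℝ) (hB : 0 < B)
    (hsubB : ∀ (i : Fin n) (u s : EuclideanSpace ℝ (Fin p)),
      (∀ v, f i u + ⟪s, v - u⟫ ≤ f i v) → ‖s‖ ≤ B)
    (X : Set (EuclideanSpace ℝ (Fin p)))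
    (hXne : X.Nonempty) (hXcl : IsClosed X) (hXcv : Convex ℝ X)
    (hX0 : (0 : EuclideanSpace ℝ (Fin p)) ∈ X)
    (P : EuclideanSpace ℝ (Fin p) → EuclideanSpace ℝ (Fin p))
    (hPmem : ∀ v, P v ∈ X)
    (hPproj : ∀ v w, w ∈ X → ‖P v - v‖ ≤ ‖w - v‖)
    (A Bh : Matrix (Fin n) (Fin n) ℝ)
    (hAnn : ∀ i j, 0 ≤ A i j) (hArow : ∀ i, ∑ j, A i j = 1)
    (hBnn : ∀ i j, 0 ≤ Bh i j) (hBcol : ∀ j, ∑ i, Bh i j = 1)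
    (ε : ℝ) (hε : 0 < ε)
    (α : ℕ → ℝ) (hαnn : ∀ k, 0 ≤ α k) (hαdec : ∀ k, α (k + 1) ≤ α k)
    (x y d : ℕ → Fin n → EuclideanSpace ℝ (Fin p))
    (hx0 : ∀ i, x 0 i = 0) (hy0 : ∀ i, y 0 i = 0)
    (hd : ∀ k i v, f i (x k i) + ⟪d k i, v - x k i⟫ ≤ f i v)
    (hxupd : ∀ k i, x (k + 1) i = P (∑ j, A i j • x k j + ε • y k i - α k • d k i))
    (hyupd : ∀ k i, y (k + 1) i =
      x k i - ∑ j, A i j • x k j + (∑ j, Bh i j • y k j) - ε • y k i)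
    (gv : ℕ → Fin n → EuclideanSpace ℝ (Fin p))
    (hgv : ∀ k i, gv k i = x (k + 1) i - ∑ j, A i j • x k j - ε • y k i)
    (g : ℕ → ℝ) (hg : ∀ k, g k = ∑ i, ‖gv k i‖)
    (zbar : ℕ → EuclideanSpace ℝ (Fin p))
    (hzbar : ∀ k, zbar k = (n : ℝ)⁻¹ • (∑ i, x k i + ∑ i, y k i))
    (Γ γ : ℝ) (hΓ : 0 < Γ) (hγ0 : 0 < γ) (hγ1 : γ < 1)
    (hM : ∀ (k : ℕ) (i : Fin n ⊕ Fin n),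
      ∑ j, |((Matrix.fromBlocks A (ε • (1 : Matrix (Fin n) (Fin n) ℝ))
          ((1 : Matrix (Fin n) (Fin n) ℝ) - A) (Bh - ε • (1 : Matrix (Fin n) (Fin n) ℝ))) ^ k
        - Matrix.fromBlocks (Matrix.of fun _ _ => (n : ℝ)⁻¹)
            (Matrix.of fun _ _ => (n : ℝ)⁻¹) 0 0 :
          Matrix (Fin n ⊕ Fin n) (Fin n ⊕ Fin n) ℝ) i j| ≤ Γ * γ ^ k)
    :
    ∀ k : ℕ,
      g k ≤ n * B * α k +
        2 * n * ε * Γ * ∑ r ∈ Finset.Icc 1 (k - 1), γ ^ (k - r) * g (r - 1) :=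
  ddps_aggregate_perturbation_bound_general f B hsubB X hXcv hX0 P hPmem hPproj A Bh hAnn hArow ε hε
    α hαnn x y d hx0 hy0 hd hxupd hyupd gv hgv g hg Γ γ hM
end

section
/- Suppose in addition that ε < (1−γ)/(2nΓγ) and Σ_{k=0}^∞ α_k² < ∞. Then for every agent i ∈ {1,…,n}, lim_{k→∞} ‖y_i^k‖ = 0. -/
/-!
Stacking `V k = (x k, y k)` turns the iteration into the linear recursion
`V (k + 1) = M • V k + (gv k, 0)`, so `V (k + 1) = ∑ s ≤ k, M ^ (k - s) • (gv s, 0)`.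
The bottom rows of the limit of `M ^ t` vanish, so those of `M ^ t` are at most `Γ γ ^ t`;
as the forcing term has no `y`-part, the summand `s = k` drops out and
`‖y (k + 1) i‖ ≤ Γ D k` with `D k = ∑ s < k, γ ^ (k - s) g s`.
A projection step moves `x` by at most `ε ‖y‖ + 2 B |α|` beyond the consensus step, so
`g (k + 1) ≤ n (ε Γ D k + 2 B |α (k + 1)|)`, and with `D (k + 1) = γ (D k + g k)` this gives
`D (k + 2) ≤ γ D (k + 1) + ε n Γ γ D k + O(|α (k + 1)|)`.
The bound on `ε` gives `γ + ε n Γ γ < 1`, and a two-step contraction driven by a null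
sequence tends to `0`.
-/

open Finset Filter
open scoped RealInnerProductSpace

theorem tendsto_zero_of_le_mul_add {ρ : ℝ} {u a : ℕ → ℝ} (hρ0 : 0 ≤ ρ) (hρ1 : ρ < 1)
    (hu : ∀ k, 0 ≤ u k) (ha : Tendsto a atTop (nhds 0))
    (hrec : ∀ k, u (k + 1) ≤ ρ * u k + a k) : Tendsto u atTop (nhds 0) := by
  refine tendsto_order.2 ⟨fun b hb => .of_forall fun k => hb.trans_le (hu k), fun δ hδ => ?_⟩
  obtain ⟨m, hm⟩ := eventually_atTop.1
    (ha.eventually (gt_mem_nhds (mul_pos (sub_pos.2 hρ1) (half_pos hδ))))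
  -- past `m`, the excess of `u` over `δ / 2` contracts geometrically
  have hexcess : ∀ j, u (m + j) - δ / 2 ≤ ρ ^ j * (u m - δ / 2) := by
    intro j
    induction j with
    | zero => simp
    | succ j ih =>
      calc u (m + j + 1) - δ / 2 ≤ ρ * (u (m + j) - δ / 2) := by
            linarith [hrec (m + j), hm (m + j) (by omega)]
        _ ≤ ρ * (ρ ^ j * (u m - δ / 2)) := mul_le_mul_of_nonneg_left ih hρ0
        _ = ρ ^ (j + 1) * (u m - δ / 2) := by ring
  have hgeom : Tendsto (fun j => ρ ^ j * (u m - δ / 2)) atTop (nhds 0) := by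
    simpa using (tendsto_pow_atTop_nhds_zero_of_lt_one hρ0 hρ1).mul_const (u m - δ / 2)
  obtain ⟨J, hJ⟩ := eventually_atTop.1 (hgeom.eventually (gt_mem_nhds (half_pos hδ)))
  refine eventually_atTop.2 ⟨m + J, fun k hk => ?_⟩
  obtain ⟨j, rfl⟩ := Nat.exists_eq_add_of_le (le_of_add_le_left hk)
  linarith [hexcess j, hJ j (by omega)]

theorem tendsto_zero_of_le_two_step {a b : ℝ} {h e : ℕ → ℝ} (ha : 0 ≤ a) (hb : 0 ≤ b)
    (hab : a + b < 1) (hh : ∀ k, 0 ≤ h k) (he : Tendsto e atTop (nhds 0))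
    (hrec : ∀ k, h (k + 2) ≤ a * h (k + 1) + b * h k + e k) : Tendsto h atTop (nhds 0) := by
  -- `h k + c * h (k + 1)` satisfies a one-step recursion with ratio `ρ`
  set c := 2 / (1 - a + b)
  set ρ := (1 + a + b) / 2
  have hc : 0 < c := div_pos two_pos (by linarith)
  have hac : 1 + c * a = ρ * c := by
    simp only [c, ρ]; field_simp [show 1 - a + b ≠ 0 by linarith]; ring
  have hbc : c * b ≤ ρ := by
    simp only [c, ρ]
    rw [div_mul_eq_mul_div, div_le_div_iff₀ (by linarith) two_pos]
    nlinarith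
  have hu : Tendsto (fun k => h k + c * h (k + 1)) atTop (nhds 0) := by
    refine tendsto_zero_of_le_mul_add (ρ := ρ) (by positivity) (by simp only [ρ]; linarith)
      (fun k => add_nonneg (hh k) (mul_nonneg hc.le (hh (k + 1))))
      (by simpa using he.const_mul c) fun k => ?_
    calc h (k + 1) + c * h (k + 1 + 1)
        ≤ h (k + 1) + c * (a * h (k + 1) + b * h k + e k) := by gcongr; exact hrec k
      _ = (1 + c * a) * h (k + 1) + c * b * h k + c * e k := by ring
      _ ≤ ρ * c * h (k + 1) + ρ * h k + c * e k := by
          rw [hac]; gcongr; exact hh k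
      _ = ρ * (h k + c * h (k + 1)) + c * e k := by ring
  exact squeeze_zero hh (fun k => le_add_of_nonneg_right (mul_nonneg hc.le (hh (k + 1)))) hu

theorem sum_range_succ_pow_sub_mul {R : Type*} [CommSemiring R] (γ : R) (g : ℕ → R) (k : ℕ) :
    ∑ s ∈ range (k + 1), γ ^ (k + 1 - s) * g s = γ * (∑ s ∈ range k, γ ^ (k - s) * g s + g k) := by
  rw [sum_range_succ, Nat.add_sub_cancel_left, pow_one, mul_add, mul_sum]
  congr 1
  refine sum_congr rfl fun s hs => ?_
  rw [Nat.succ_sub (mem_range.1 hs).le, pow_succ', mul_assoc]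

theorem succ_eq_sum_pow_smul_of_recurrence {S W : Type*} [Monoid S] [AddCommMonoid W]
    [DistribMulAction S W] {m : S} {V G : ℕ → W} (hV0 : V 0 = 0)
    (hV : ∀ k, V (k + 1) = m • V k + G k) (k : ℕ) :
    V (k + 1) = ∑ s ∈ range (k + 1), m ^ (k - s) • G s := by
  induction k with
  | zero => simp [hV, hV0]
  | succ k ih =>
    rw [hV, ih, smul_sum, sum_range_succ _ (k + 1), Nat.sub_self, pow_zero, one_smul]
    congr 1
    refine sum_congr rfl fun s hs => ?_
    rw [smul_smul, ← pow_succ', Nat.succ_sub (mem_range_succ_iff.1 hs)]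

theorem norm_proj_sub_le {E : Type*} [SeminormedAddCommGroup E] {X : Set E} {P : E → E}
    (hP : ∀ v w, w ∈ X → ‖P v - v‖ ≤ ‖w - v‖) {w : E} (hw : w ∈ X) (u v : E) :
    ‖P (w + u - v) - w - u‖ ≤ ‖u‖ + 2 * ‖v‖ :=
  calc ‖P (w + u - v) - w - u‖ = ‖(P (w + u - v) - (w + u - v)) - v‖ := by congr 1; abel
    _ ≤ ‖w - (w + u - v)‖ + ‖v‖ := (norm_sub_le _ _).trans (by gcongr; exact hP _ _ hw)
    _ = ‖v - u‖ + ‖v‖ := by congr 2; abel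
    _ ≤ ‖u‖ + 2 * ‖v‖ := by linarith [norm_sub_le v u]

theorem Matrix.abs_apply_le_sum_abs_sub_apply {ι : Type*} [Fintype ι] {Q L : Matrix ι ι ℝ} {r : ι}
    (hL : ∀ j, L r j = 0) (j : ι) : |Q r j| ≤ ∑ j', |(Q - L) r j'| := by
  simpa [hL] using
    single_le_sum (f := fun j' => |(Q - L) r j'|) (fun _ _ => abs_nonneg _) (mem_univ j)

section

open Matrix.Module

variable {ι E : Type*} [Fintype ι] [DecidableEq ι]

theorem Matrix.Module.fromBlocks_smul_sum_elim [AddCommGroup E] [Module ℝ E]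
    (P Q R S : Matrix ι ι ℝ) (u v : ι → E) :
    Matrix.fromBlocks P Q R S • Sum.elim u v = Sum.elim (P • u + Q • v) (R • u + S • v) := by
  funext j
  cases j <;> simp [Fintype.sum_sum_type]

theorem Matrix.Module.norm_smul_apply_le [SeminormedAddCommGroup E] [NormedSpace ℝ E]
    (N : Matrix ι ι ℝ) (v : ι → E) {i : ι} {c : ℝ} (hc : ∀ j, |N i j| ≤ c) :
    ‖(N • v) i‖ ≤ c * ∑ j, ‖v j‖ := by
  rw [smul_apply, mul_sum]
  refine (norm_sum_le _ _).trans (sum_le_sum fun j _ => ?_)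
  rw [norm_smul, Real.norm_eq_abs]
  exact mul_le_mul_of_nonneg_right (hc j) (norm_nonneg _)

theorem norm_recurrence_succ_apply_le [SeminormedAddCommGroup E] [NormedSpace ℝ E]
    {M : Matrix ι ι ℝ} {V G : ℕ → ι → E} (hV0 : V 0 = 0) (hV : ∀ k, V (k + 1) = M • V k + G k)
    {r : ι} (hGr : ∀ k, G k r = 0) {Γ γ : ℝ} (hM : ∀ t j, |(M ^ t) r j| ≤ Γ * γ ^ t) (k : ℕ) :
    ‖V (k + 1) r‖ ≤ Γ * ∑ s ∈ range k, γ ^ (k - s) * ∑ j, ‖G s j‖ := by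
  rw [succ_eq_sum_pow_smul_of_recurrence hV0 hV, sum_range_succ, Nat.sub_self, pow_zero, one_smul,
    Pi.add_apply, hGr, add_zero, Finset.sum_apply, mul_sum]
  refine (norm_sum_le _ _).trans (sum_le_sum fun s _ => ?_)
  rw [← mul_assoc]
  exact Matrix.Module.norm_smul_apply_le _ _ (hM _)

def ddpsMatrix (A Bh : Matrix ι ι ℝ) (ε : ℝ) : Matrix (ι ⊕ ι) (ι ⊕ ι) ℝ :=
  Matrix.fromBlocks A (ε • 1) (1 - A) (Bh - ε • 1)

theorem ddpsMatrix_smul_add [AddCommGroup E] [Module ℝ E] {A Bh : Matrix ι ι ℝ} {ε : ℝ}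
    {x y x' y' g : ι → E} (hx' : ∀ i, x' i = g i + ∑ j, A i j • x j + ε • y i)
    (hy' : ∀ i, y' i = x i - ∑ j, A i j • x j + ∑ j, Bh i j • y j - ε • y i) :
    Sum.elim x' y' = ddpsMatrix A Bh ε • Sum.elim x y + Sum.elim g 0 := by
  have hx : x' = g + A • x + ε • y := funext hx'
  have hy : y' = x - A • x + Bh • y - ε • y := funext hy'
  rw [ddpsMatrix, Matrix.Module.fromBlocks_smul_sum_elim, ← Sum.elim_add_add, sub_smul, sub_smul,
    smul_assoc, one_smul, one_smul, hx, hy]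
  congr 1 <;> abel

theorem ddps_norm_y_succ_le [SeminormedAddCommGroup E] [NormedSpace ℝ E]
    {A Bh L₁ L₂ : Matrix ι ι ℝ} {ε Γ γ : ℝ} {x y gv : ℕ → ι → E} {g : ℕ → ℝ}
    (hx0 : ∀ i, x 0 i = 0) (hy0 : ∀ i, y 0 i = 0)
    (hyupd : ∀ k i, y (k + 1) i =
      x k i - ∑ j, A i j • x k j + (∑ j, Bh i j • y k j) - ε • y k i)
    (hgv : ∀ k i, gv k i = x (k + 1) i - ∑ j, A i j • x k j - ε • y k i)
    (hg : ∀ k, g k = ∑ i, ‖gv k i‖)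
    (hM : ∀ t i, ∑ j, |(ddpsMatrix A Bh ε ^ t - Matrix.fromBlocks L₁ L₂ 0 0 :
      Matrix (ι ⊕ ι) (ι ⊕ ι) ℝ) (Sum.inr i) j| ≤ Γ * γ ^ t) (k : ℕ) (i : ι) :
    ‖y (k + 1) i‖ ≤ Γ * ∑ s ∈ range k, γ ^ (k - s) * g s := by
  have hG : ∀ s, ∑ j, ‖Sum.elim (gv s) (0 : ι → E) j‖ = g s := by
    simp [Fintype.sum_sum_type, hg]
  simpa only [hG, Sum.elim_inr] using norm_recurrence_succ_apply_le
    (V := fun k => Sum.elim (x k) (y k)) (G := fun k => Sum.elim (gv k) 0) (r := Sum.inr i)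
    (funext fun j => by cases j <;> simp [hx0, hy0])
    (fun k => ddpsMatrix_smul_add (fun i => by rw [hgv]; abel) (hyupd k)) (fun _ => rfl)
    (fun t j => (Matrix.abs_apply_le_sum_abs_sub_apply (fun j => by cases j <;> rfl) j).trans
      (hM t i)) k

end

theorem ddps_g_le {ι E : Type*} [Fintype ι] [SeminormedAddCommGroup E] [NormedSpace ℝ E]
    {X : Set E} (hXcv : Convex ℝ X) (hX0 : (0 : E) ∈ X) {P : E → E} (hPmem : ∀ v, P v ∈ X)
    (hPproj : ∀ v w, w ∈ X → ‖P v - v‖ ≤ ‖w - v‖) {A : Matrix ι ι ℝ}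
    (hAnn : ∀ i j, 0 ≤ A i j) (hArow : ∀ i, ∑ j, A i j = 1) {ε : ℝ} (hε : 0 ≤ ε) {α : ℕ → ℝ}
    {B : ℝ} {x y d gv : ℕ → ι → E} {g : ℕ → ℝ} (hx0 : ∀ i, x 0 i = 0) (hdB : ∀ k i, ‖d k i‖ ≤ B)
    (hxupd : ∀ k i, x (k + 1) i = P (∑ j, A i j • x k j + ε • y k i - α k • d k i))
    (hgv : ∀ k i, gv k i = x (k + 1) i - ∑ j, A i j • x k j - ε • y k i)
    (hg : ∀ k, g k = ∑ i, ‖gv k i‖) {k : ℕ} {Y : ℝ} (hY : ∀ i, ‖y k i‖ ≤ Y) :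
    g k ≤ Fintype.card ι * (ε * Y + 2 * B * ‖α k‖) := by
  have hxX : ∀ k i, x k i ∈ X := by
    rintro (_ | k) i
    · exact hx0 i ▸ hX0
    · exact hxupd k i ▸ hPmem _
  have hgv_le : ∀ i, ‖gv k i‖ ≤ ε * Y + 2 * B * ‖α k‖ := fun i =>
    calc ‖gv k i‖ ≤ ‖ε • y k i‖ + 2 * ‖α k • d k i‖ := by
          rw [hgv, hxupd]
          exact norm_proj_sub_le hPproj
            (hXcv.sum_mem (fun j _ => hAnn i j) (hArow i) fun j _ => hxX k j) _ _
      _ ≤ ε * Y + 2 * B * ‖α k‖ := by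
          rw [norm_smul, norm_smul, Real.norm_of_nonneg hε]
          nlinarith [hdB k i, hY i, norm_nonneg (α k)]
  simpa [hg, mul_add] using sum_le_sum fun i (_ : i ∈ univ) => hgv_le i

theorem ddps_aux_tendsto_zero_general
    {n p : ℕ}
    (f : Fin n → EuclideanSpace ℝ (Fin p) → ℝ)
    (B : ℝ)
    (hsubB : ∀ (i : Fin n) (u s : EuclideanSpace ℝ (Fin p)),
      (∀ v, f i u + ⟪s, v - u⟫ ≤ f i v) → ‖s‖ ≤ B)
    (X : Set (EuclideanSpace ℝ (Fin p)))
    (hXcv : Convex ℝ X)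
    (hX0 : (0 : EuclideanSpace ℝ (Fin p)) ∈ X)
    (P : EuclideanSpace ℝ (Fin p) → EuclideanSpace ℝ (Fin p))
    (hPmem : ∀ v, P v ∈ X)
    (hPproj : ∀ v w, w ∈ X → ‖P v - v‖ ≤ ‖w - v‖)
    (A Bh : Matrix (Fin n) (Fin n) ℝ)
    (hAnn : ∀ i j, 0 ≤ A i j) (hArow : ∀ i, ∑ j, A i j = 1)
    (ε : ℝ) (hε : 0 < ε)
    (α : ℕ → ℝ)
    (x y d : ℕ → Fin n → EuclideanSpace ℝ (Fin p))
    (hx0 : ∀ i, x 0 i = 0) (hy0 : ∀ i, y 0 i = 0)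
    (hd : ∀ k i v, f i (x k i) + ⟪d k i, v - x k i⟫ ≤ f i v)
    (hxupd : ∀ k i, x (k + 1) i = P (∑ j, A i j • x k j + ε • y k i - α k • d k i))
    (hyupd : ∀ k i, y (k + 1) i =
      x k i - ∑ j, A i j • x k j + (∑ j, Bh i j • y k j) - ε • y k i)
    (gv : ℕ → Fin n → EuclideanSpace ℝ (Fin p))
    (hgv : ∀ k i, gv k i = x (k + 1) i - ∑ j, A i j • x k j - ε • y k i)
    (g : ℕ → ℝ) (hg : ∀ k, g k = ∑ i, ‖gv k i‖)
    (Γ γ : ℝ) (hΓ : 0 < Γ) (hγ0 : 0 < γ) (hγ1 : γ < 1)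
    (hM : ∀ (k : ℕ) (i : Fin n ⊕ Fin n),
      ∑ j, |((Matrix.fromBlocks A (ε • (1 : Matrix (Fin n) (Fin n) ℝ))
          ((1 : Matrix (Fin n) (Fin n) ℝ) - A) (Bh - ε • (1 : Matrix (Fin n) (Fin n) ℝ))) ^ k
        - Matrix.fromBlocks (Matrix.of fun _ _ => (n : ℝ)⁻¹)
            (Matrix.of fun _ _ => (n : ℝ)⁻¹) 0 0 :
          Matrix (Fin n ⊕ Fin n) (Fin n ⊕ Fin n) ℝ) i j| ≤ Γ * γ ^ k)
    (hεsmall : ε < (1 - γ) / (2 * n * Γ * γ))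
    (hα2 : Summable fun k => (α k) ^ 2)
    :
    ∀ i : Fin n, Tendsto (fun k => ‖y k i‖) atTop (nhds 0) := by
  intro i₀
  have hn : (0 : ℝ) < n := Nat.cast_pos.2 i₀.pos
  have hα : Tendsto (fun k => ‖α k‖) atTop (nhds 0) := by
    simpa [Real.sqrt_sq_eq_abs] using hα2.tendsto_atTop_zero.sqrt
  have hy_le := ddps_norm_y_succ_le hx0 hy0 hyupd hgv hg fun t i => hM t (Sum.inr i)
  set D : ℕ → ℝ := fun k => ∑ s ∈ range k, γ ^ (k - s) * g s
  have hD : ∀ k, D (k + 2) ≤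
      γ * D (k + 1) + ε * n * Γ * γ * D k + 2 * n * B * γ * ‖α (k + 1)‖ := by
    intro k
    have hg1 := ddps_g_le hXcv hX0 hPmem hPproj hAnn hArow hε.le hx0
      (fun k i => hsubB i _ _ (hd k i)) hxupd hgv hg (hy_le k)
    rw [Fintype.card_fin] at hg1
    rw [show D (k + 2) = γ * (D (k + 1) + g (k + 1)) from sum_range_succ_pow_sub_mul γ g (k + 1)]
    linarith [mul_le_mul_of_nonneg_left hg1 hγ0.le]
  have hsmall : γ + ε * n * Γ * γ < 1 := by
    have := (lt_div_iff₀ (by positivity)).1 hεsmall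
    linarith
  have hD0 : Tendsto D atTop (nhds 0) :=
    tendsto_zero_of_le_two_step hγ0.le (by positivity) hsmall
      (fun k => sum_nonneg fun s _ => mul_nonneg (pow_nonneg hγ0.le _)
        (hg s ▸ sum_nonneg fun _ _ => norm_nonneg _))
      (by simpa using ((tendsto_add_atTop_iff_nat 1).2 hα).const_mul (2 * n * B * γ)) hD
  rw [← tendsto_add_atTop_iff_nat 1]
  exact squeeze_zero (fun _ => norm_nonneg _) (fun k => hy_le k i₀)
    (by simpa using hD0.const_mul Γ)

theorem ddps_aux_tendsto_zero
    {n p : ℕ} (hn : 1 ≤ n) (hp : 1 ≤ p)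
    (f : Fin n → EuclideanSpace ℝ (Fin p) → ℝ)
    (hconv : ∀ i, ConvexOn ℝ Set.univ (f i))
    (B : ℝ) (hB : 0 < B)
    (hsubB : ∀ (i : Fin n) (u s : EuclideanSpace ℝ (Fin p)),
      (∀ v, f i u + ⟪s, v - u⟫ ≤ f i v) → ‖s‖ ≤ B)
    (X : Set (EuclideanSpace ℝ (Fin p)))
    (hXne : X.Nonempty) (hXcl : IsClosed X) (hXcv : Convex ℝ X)
    (hX0 : (0 : EuclideanSpace ℝ (Fin p)) ∈ X)
    (P : EuclideanSpace ℝ (Fin p) → EuclideanSpace ℝ (Fin p))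
    (hPmem : ∀ v, P v ∈ X)
    (hPproj : ∀ v w, w ∈ X → ‖P v - v‖ ≤ ‖w - v‖)
    (A Bh : Matrix (Fin n) (Fin n) ℝ)
    (hAnn : ∀ i j, 0 ≤ A i j) (hArow : ∀ i, ∑ j, A i j = 1)
    (hBnn : ∀ i j, 0 ≤ Bh i j) (hBcol : ∀ j, ∑ i, Bh i j = 1)
    (ε : ℝ) (hε : 0 < ε)
    (α : ℕ → ℝ) (hαnn : ∀ k, 0 ≤ α k) (hαdec : ∀ k, α (k + 1) ≤ α k)
    (x y d : ℕ → Fin n → EuclideanSpace ℝ (Fin p))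
    (hx0 : ∀ i, x 0 i = 0) (hy0 : ∀ i, y 0 i = 0)
    (hd : ∀ k i v, f i (x k i) + ⟪d k i, v - x k i⟫ ≤ f i v)
    (hxupd : ∀ k i, x (k + 1) i = P (∑ j, A i j • x k j + ε • y k i - α k • d k i))
    (hyupd : ∀ k i, y (k + 1) i =
      x k i - ∑ j, A i j • x k j + (∑ j, Bh i j • y k j) - ε • y k i)
    (gv : ℕ → Fin n → EuclideanSpace ℝ (Fin p))
    (hgv : ∀ k i, gv k i = x (k + 1) i - ∑ j, A i j • x k j - ε • y k i)
    (g : ℕ → ℝ) (hg : ∀ k, g k = ∑ i, ‖gv k i‖)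
    (zbar : ℕ → EuclideanSpace ℝ (Fin p))
    (hzbar : ∀ k, zbar k = (n : ℝ)⁻¹ • (∑ i, x k i + ∑ i, y k i))
    (Γ γ : ℝ) (hΓ : 0 < Γ) (hγ0 : 0 < γ) (hγ1 : γ < 1)
    (hM : ∀ (k : ℕ) (i : Fin n ⊕ Fin n),
      ∑ j, |((Matrix.fromBlocks A (ε • (1 : Matrix (Fin n) (Fin n) ℝ))
          ((1 : Matrix (Fin n) (Fin n) ℝ) - A) (Bh - ε • (1 : Matrix (Fin n) (Fin n) ℝ))) ^ k
        - Matrix.fromBlocks (Matrix.of fun _ _ => (n : ℝ)⁻¹)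
            (Matrix.of fun _ _ => (n : ℝ)⁻¹) 0 0 :
          Matrix (Fin n ⊕ Fin n) (Fin n ⊕ Fin n) ℝ) i j| ≤ Γ * γ ^ k)
    (hεsmall : ε < (1 - γ) / (2 * n * Γ * γ))
    (hα2 : Summable fun k => (α k) ^ 2)
    :
    ∀ i : Fin n, Tendsto (fun k => ‖y k i‖) atTop (nhds 0) :=
  ddps_aux_tendsto_zero_general f B hsubB X hXcv hX0 P hPmem hPproj A Bh hAnn hArow ε hε α x y d hx0
    hy0 hd hxupd hyupd gv hgv g hg Γ γ hΓ hγ0 hγ1 hM hεsmall hα2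
end
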